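/- Let H be a finite-dimensional complex Hilbert space with dim H ≥ 3. Then there exists a finite set O of rank-1 projections on H for which no valuation exists. -/

import Mathlib

section Defs

variable {K : Type*} [NormedAddCommGroup K] [InnerProductSpace ℂ K]

/-- A rank-1 projection: Hermitian idempotent of rank 1. -/
def IsRankOneProjOp (T : K →L[ℂ] K) : Prop :=
  (∀ x y : K, inner ℂ (T x) y = (inner ℂ x (T y) : ℂ)) ∧ T ∘L T = T ∧
    LinearMap.rank (T : K →ₗ[ℂ] K) = 1

/-- A valuation for a set `O` of operators: `v` assigns to each `A ∈ O` one of its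
eigenvalues, such that any pairwise commuting finite subfamily has a common nonzero
eigenvector realizing the assigned values (joint spectrum membership). -/
def IsValuationOp (O : Set (K →L[ℂ] K)) (v : (K →L[ℂ] K) → ℝ) : Prop :=
  (∀ A ∈ O, ∃ ψ : K, ψ ≠ 0 ∧ A ψ = (v A : ℂ) • ψ) ∧
  (∀ s : Finset (K →L[ℂ] K), ↑s ⊆ O →
    (∀ A ∈ s, ∀ B ∈ s, A ∘L B = B ∘L A) →
    ∃ ψ : K, ψ ≠ 0 ∧ ∀ A ∈ s, A ψ = (v A : ℂ) • ψ)

end Defs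

/-!
Call a set `V` of nonzero vectors Kochen–Specker if no set `T` of "true" vectors contains
at most one vector of each orthogonal pair in `V` and at least one vector of each orthogonal
basis contained in `V`. A valuation on the projections onto the lines of `V` would give such a
`T`, namely the vectors whose projection gets the value 1: the projections of an orthogonal
family commute, so the valuation provides a common eigenvector `ψ ≠ 0` realizing its values; `ψ`
cannot lie on two orthogonal lines, and it cannot be orthogonal to all the vectors of a basis.

In dimension 3, Peres' 33 rays form a Kochen–Specker set (a finite case analysis). A
Kochen–Specker set in dimension `n` gives one in dimension `n + 1`: place copies in the
orthogonal complements of two orthogonal vectors `e₁`, `e₂` and add `e₁`, `e₂`. One of `e₁`, `e₂`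
is not true, and it completes each basis of its copy to a basis of the whole space.
-/

open scoped InnerProductSpace
open Module (finrank)

section KochenSpecker

variable {𝕜 E F : Type*} [RCLike 𝕜] [NormedAddCommGroup E] [InnerProductSpace 𝕜 E]
  [NormedAddCommGroup F] [InnerProductSpace 𝕜 F]

theorem Finset.span_eq_top_of_pairwise_inner_eq_zero [FiniteDimensional 𝕜 E] {S : Finset E}
    (h0 : 0 ∉ S) (hS : (S : Set E).Pairwise (⟪·, ·⟫_𝕜 = 0)) (hcard : S.card = finrank 𝕜 E) :
    Submodule.span 𝕜 (S : Set E) = ⊤ := by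
  have hli : LinearIndependent 𝕜 ((↑) : S → E) :=
    linearIndependent_of_ne_zero_of_inner_eq_zero (fun x hx => h0 (hx ▸ x.2))
      fun x y hxy => hS x.2 y.2 (Subtype.coe_ne_coe.2 hxy)
  simpa using hli.span_eq_top_of_card_eq_finrank' (by simpa using hcard)

theorem starProjection_span_singleton_comp_eq_zero {u w : E} (h : ⟪u, w⟫_𝕜 = 0) :
    (𝕜 ∙ u).starProjection ∘L (𝕜 ∙ w).starProjection = 0 :=
  Submodule.starProjection_comp_starProjection_eq_zero_iff.2 <| Submodule.isOrtho_span.2 <| by simpa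

variable (𝕜) in
def IsKSColoring (V T : Set E) : Prop :=
  (∀ u ∈ V, ∀ w ∈ V, ⟪u, w⟫_𝕜 = 0 → u ∈ T → w ∉ T) ∧
  ∀ S : Finset E, ↑S ⊆ V → S.card = finrank 𝕜 E → (S : Set E).Pairwise (⟪·, ·⟫_𝕜 = 0) →
    ∃ u ∈ S, u ∈ T

variable (𝕜) in
def IsKochenSpecker (V : Set E) : Prop :=
  (0 : E) ∉ V ∧ ∀ T, ¬ IsKSColoring 𝕜 V T

theorem IsKSColoring.mem_or_mem_or_mem {V T : Set E} (hT : IsKSColoring 𝕜 V T)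
    (hE : finrank 𝕜 E = 3) {u v w : E} (hu : u ∈ V) (hv : v ∈ V) (hw : w ∈ V) (hu0 : u ≠ 0)
    (hv0 : v ≠ 0) (huv : ⟪u, v⟫_𝕜 = 0) (huw : ⟪u, w⟫_𝕜 = 0) (hvw : ⟪v, w⟫_𝕜 = 0) :
    u ∈ T ∨ v ∈ T ∨ w ∈ T := by
  classical
  have hne {x y : E} (hx : x ≠ 0) (hxy : ⟪x, y⟫_𝕜 = 0) : x ≠ y := by
    rintro rfl
    exact hx (inner_self_eq_zero.1 hxy)
  obtain ⟨x, hx, hxT⟩ := hT.2 {u, v, w} (by simp [Set.insert_subset_iff, hu, hv, hw])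
    (by rw [hE, Finset.card_eq_three]; exact ⟨u, v, w, hne hu0 huv, hne hu0 huw, hne hv0 hvw, rfl⟩)
    (by simp [Set.pairwise_insert, inner_eq_zero_symm, huv, huw, hvw])
  simp only [Finset.mem_insert, Finset.mem_singleton] at hx
  rcases hx with rfl | rfl | rfl <;> simp [hxT]

theorem IsKochenSpecker.image {V : Set E} (hV : IsKochenSpecker 𝕜 V) (e : E ≃ₗᵢ[𝕜] F) :
    IsKochenSpecker 𝕜 (e '' V) := by
  refine ⟨?_, fun T hT => hV.2 (e ⁻¹' T) ⟨?_, ?_⟩⟩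
  · rintro ⟨u, hu, hu0⟩
    rw [e.injective (hu0.trans e.map_zero.symm)] at hu
    exact hV.1 hu
  · intro u hu w hw huw
    exact hT.1 _ (Set.mem_image_of_mem e hu) _ (Set.mem_image_of_mem e hw)
      (by rwa [e.inner_map_map])
  · classical
    intro S hSV hcard hS
    obtain ⟨u, hu, huT⟩ := hT.2 (S.image e) (by simpa using Set.image_mono hSV)
      (by rw [Finset.card_image_of_injective _ e.injective, hcard, e.toLinearEquiv.finrank_eq])
      (by
        rw [Finset.coe_image, e.injective.injOn.pairwise_image]
        exact hS.imp fun x y h => by simpa [Function.onFun, e.inner_map_map] using h)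
    obtain ⟨x, hx, rfl⟩ := Finset.mem_image.1 hu
    exact ⟨x, hx, huT⟩

theorem IsKSColoring.preimage_subtype {W T : Set E} (hT : IsKSColoring 𝕜 W T)
    {K : Submodule 𝕜 E} (hK : finrank 𝕜 K + 1 = finrank 𝕜 E) {V : Set K} (hVW : (↑) '' V ⊆ W)
    {e : E} (heW : e ∈ W) (heK : e ∈ Kᗮ) (he0 : e ≠ 0) (heT : e ∉ T) :
    IsKSColoring 𝕜 V ((↑) ⁻¹' T) := by
  refine ⟨fun u hu w hw huw => hT.1 u (hVW ⟨u, hu, rfl⟩) w (hVW ⟨w, hw, rfl⟩) huw, ?_⟩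
  classical
  intro S hSV hcard hS
  let ι : K ↪ E := Function.Embedding.subtype _
  have he_orth (x : K) : ⟪e, x⟫_𝕜 = 0 := Submodule.inner_left_of_mem_orthogonal x.2 heK
  have he_notMem : e ∉ S.map ι := by
    rintro h
    obtain ⟨x, -, rfl⟩ := Finset.mem_map.1 h
    exact he0 (inner_self_eq_zero.1 (he_orth x))
  obtain ⟨u, hu, huT⟩ := hT.2 (insert e (S.map ι))
    (by
      rw [Finset.coe_insert, Finset.coe_map, Set.insert_subset_iff]
      exact ⟨heW, (Set.image_mono hSV).trans hVW⟩)
    (by rw [Finset.card_insert_of_notMem he_notMem, Finset.card_map, hcard, hK])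
    (by
      rw [Finset.coe_insert, Finset.coe_map, Set.pairwise_insert_of_symm,
        ι.injective.injOn.pairwise_image]
      refine ⟨hS.imp fun x y h => ?_, ?_⟩
      · simpa [Function.onFun, ι] using h
      · rintro _ ⟨x, -, rfl⟩ -
        exact he_orth x)
  obtain rfl | hu := Finset.mem_insert.1 hu
  · exact absurd huT heT
  · obtain ⟨x, hx, rfl⟩ := Finset.mem_map.1 hu
    exact ⟨x, hx, huT⟩

theorem IsKochenSpecker.insert_insert_union {K₁ K₂ : Submodule 𝕜 E} {V₁ : Set K₁} {V₂ : Set K₂}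
    (hV₁ : IsKochenSpecker 𝕜 V₁) (hV₂ : IsKochenSpecker 𝕜 V₂)
    (hK₁ : finrank 𝕜 K₁ + 1 = finrank 𝕜 E) (hK₂ : finrank 𝕜 K₂ + 1 = finrank 𝕜 E)
    {e₁ e₂ : E} (he₁K : e₁ ∈ K₁ᗮ) (he₂K : e₂ ∈ K₂ᗮ) (he₁0 : e₁ ≠ 0) (he₂0 : e₂ ≠ 0)
    (he₁₂ : ⟪e₁, e₂⟫_𝕜 = 0) :
    IsKochenSpecker 𝕜 (insert e₁ (insert e₂ ((↑) '' V₁ ∪ (↑) '' V₂))) := by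
  refine ⟨?_, fun T hT => ?_⟩
  · rintro (h | h | ⟨x, hx, hx0⟩ | ⟨x, hx, hx0⟩)
    · exact he₁0 h.symm
    · exact he₂0 h.symm
    · exact hV₁.1 (by rwa [Submodule.coe_eq_zero.1 hx0] at hx)
    · exact hV₂.1 (by rwa [Submodule.coe_eq_zero.1 hx0] at hx)
  have he₁W : e₁ ∈ insert e₁ (insert e₂ ((↑) '' V₁ ∪ (↑) '' V₂)) := Set.mem_insert _ _
  have he₂W : e₂ ∈ insert e₁ (insert e₂ ((↑) '' V₁ ∪ (↑) '' V₂)) :=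
    Set.mem_insert_of_mem _ (Set.mem_insert _ _)
  by_cases he₁T : e₁ ∈ T
  · refine hV₂.2 _ (hT.preimage_subtype hK₂ ?_ he₂W he₂K he₂0 (hT.1 _ he₁W _ he₂W he₁₂ he₁T))
    exact fun x hx => Set.mem_insert_of_mem _ (Set.mem_insert_of_mem _ (Or.inr hx))
  · refine hV₁.2 _ (hT.preimage_subtype hK₁ ?_ he₁W he₁K he₁0 he₁T)
    exact fun x hx => Set.mem_insert_of_mem _ (Set.mem_insert_of_mem _ (Or.inl hx))

end KochenSpecker

section Peres

open Zsqrtd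

-- Peres' 33 rays in `ℝ³`; coordinates in `ℤ[√2]` make orthogonality decidable.
def peresVec : Fin 33 → Fin 3 → ℤ√2 := ![
  ![0, 0, 1], ![0, sqrtd, -1], ![0, sqrtd, 1], ![0, 1, -1],
  ![0, 1, -sqrtd], ![0, 1, 0], ![0, 1, sqrtd], ![0, 1, 1],
  ![sqrtd, -1, -1], ![sqrtd, -1, 0], ![sqrtd, -1, 1], ![sqrtd, 0, -1],
  ![sqrtd, 0, 1], ![sqrtd, 1, -1], ![sqrtd, 1, 0], ![sqrtd, 1, 1],
  ![1, -1, -sqrtd], ![1, -1, 0], ![1, -1, sqrtd], ![1, -sqrtd, -1],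
  ![1, -sqrtd, 0], ![1, -sqrtd, 1], ![1, 0, -1], ![1, 0, -sqrtd],
  ![1, 0, 0], ![1, 0, sqrtd], ![1, 0, 1], ![1, sqrtd, -1],
  ![1, sqrtd, 0], ![1, sqrtd, 1], ![1, 1, -sqrtd], ![1, 1, 0],
  ![1, 1, sqrtd]]

-- The 36 of the 72 orthogonal pairs of Peres rays that the contradiction needs.
def peresOrthogonalPairs : List (Fin 33 × Fin 33) := [
    (0, 5), (0, 17), (0, 24), (0, 31), (1, 16), (1, 32), (2, 18), (2, 30), (3, 7),
    (3, 24), (4, 19), (4, 29), (5, 22), (5, 24), (5, 26), (6, 21), (6, 27), (7, 24),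
    (8, 25), (8, 28), (9, 27), (9, 29), (10, 23), (10, 28), (11, 18), (11, 32), (12, 16),
    (12, 30), (13, 20), (13, 25), (14, 19), (14, 21), (15, 20), (15, 23), (17, 31), (22, 26)]

def peresTriads : List (Fin 33 × Fin 33 × Fin 33) := [
    (0, 5, 24), (0, 9, 28), (0, 14, 20), (0, 17, 31), (1, 6, 24), (2, 4, 24), (3, 7, 24),
    (3, 8, 15), (5, 11, 25), (5, 12, 23), (5, 22, 26), (7, 10, 13), (16, 18, 31), (17, 30, 32),
    (19, 26, 27), (21, 22, 29)]

theorem peresVec_dotProduct_self_ne_zero : ∀ i, peresVec i ⬝ᵥ peresVec i ≠ 0 := by decide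

theorem peresOrthogonalPairs_orthogonal :
    peresOrthogonalPairs.all fun p => peresVec p.1 ⬝ᵥ peresVec p.2 = 0 := by decide

theorem peresTriads_orthogonal :
    peresTriads.all fun t => peresVec t.1 ⬝ᵥ peresVec t.2.1 = 0 ∧
      peresVec t.1 ⬝ᵥ peresVec t.2.2 = 0 ∧ peresVec t.2.1 ⬝ᵥ peresVec t.2.2 = 0 := by decide

theorem peres_not_colorable (G : Fin 33 → Prop)
    (hpair : ∀ p ∈ peresOrthogonalPairs, ¬(G p.1 ∧ G p.2))
    (htriad : ∀ t ∈ peresTriads, G t.1 ∨ G t.2.1 ∨ G t.2.2) : False := by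
  simp only [peresOrthogonalPairs, peresTriads, List.forall_mem_cons, List.not_mem_nil,
    IsEmpty.forall_iff, implies_true, and_true] at hpair htriad
  grind

variable (𝕜 : Type*) [RCLike 𝕜]

noncomputable def peresRay (i : Fin 33) : EuclideanSpace 𝕜 (Fin 3) :=
  WithLp.toLp 2 fun j => (toReal zero_le_two (peresVec i j) : 𝕜)

variable {𝕜}

theorem inner_peresRay (i j : Fin 33) :
    ⟪peresRay 𝕜 i, peresRay 𝕜 j⟫_𝕜 = (toReal zero_le_two (peresVec i ⬝ᵥ peresVec j) : 𝕜) := by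
  simp only [peresRay, PiLp.inner_apply, RCLike.inner_apply, RCLike.conj_ofReal, dotProduct,
    map_sum, map_mul]
  exact Finset.sum_congr rfl fun _ _ => mul_comm _ _

theorem isKochenSpecker_range_peresRay : IsKochenSpecker 𝕜 (Set.range (peresRay 𝕜)) := by
  have hinj : Function.Injective (toReal (d := 2) zero_le_two) :=
    toReal_injective zero_le_two fun n h => Int.sq_ne_two_mod_four n (by rw [← h]; rfl)
  have horth {i j : Fin 33} (h : peresVec i ⬝ᵥ peresVec j = 0) :
      ⟪peresRay 𝕜 i, peresRay 𝕜 j⟫_𝕜 = 0 := by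
    rw [inner_peresRay, h, map_zero, RCLike.ofReal_zero]
  have hne (i : Fin 33) : peresRay 𝕜 i ≠ 0 := by
    rw [← inner_self_ne_zero (𝕜 := 𝕜), inner_peresRay, RCLike.ofReal_ne_zero,
      map_ne_zero_iff _ hinj]
    exact peresVec_dotProduct_self_ne_zero i
  refine ⟨fun ⟨i, hi⟩ => hne i hi, fun T hT => peres_not_colorable (peresRay 𝕜 · ∈ T) ?_ ?_⟩
  · intro p hp hpT
    have hp0 := of_decide_eq_true (List.all_eq_true.1 peresOrthogonalPairs_orthogonal p hp)
    exact hT.1 _ ⟨_, rfl⟩ _ ⟨_, rfl⟩ (horth hp0) hpT.1 hpT.2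
  · intro t ht
    obtain ⟨h₁₂, h₁₃, h₂₃⟩ := of_decide_eq_true (List.all_eq_true.1 peresTriads_orthogonal t ht)
    exact hT.mem_or_mem_or_mem finrank_euclideanSpace_fin ⟨_, rfl⟩ ⟨_, rfl⟩ ⟨_, rfl⟩ (hne _) (hne _)
      (horth h₁₂) (horth h₁₃) (horth h₂₃)

end Peres

theorem exists_finite_isKochenSpecker {𝕜 E : Type*} [RCLike 𝕜] [NormedAddCommGroup E]
    [InnerProductSpace 𝕜 E] [FiniteDimensional 𝕜 E] (hE : 3 ≤ finrank 𝕜 E) :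
    ∃ V : Set E, V.Finite ∧ IsKochenSpecker 𝕜 V := by
  obtain ⟨n, hn⟩ : ∃ n, finrank 𝕜 E = n := ⟨_, rfl⟩
  rw [hn] at hE
  induction n, hE using Nat.le_induction generalizing E with
  | base =>
    let e := ((stdOrthonormalBasis 𝕜 E).reindex (finCongr hn)).repr.symm
    exact ⟨e '' Set.range (peresRay 𝕜), (Set.finite_range _).image _,
      isKochenSpecker_range_peresRay.image e⟩
  | succ n hn3 ih =>
    have : Fact (finrank 𝕜 E = n + 1) := ⟨hn⟩
    let b := (stdOrthonormalBasis 𝕜 E).reindex (finCongr hn)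
    have hb (i : Fin (n + 1)) : b i ≠ 0 := b.orthonormal.ne_zero i
    have hK (i : Fin (n + 1)) : finrank 𝕜 (𝕜 ∙ b i)ᗮ = n :=
      Submodule.finrank_orthogonal_span_singleton (hb i)
    have hbK (i : Fin (n + 1)) : b i ∈ (𝕜 ∙ b i)ᗮᗮ :=
      Submodule.le_orthogonal_orthogonal _ (Submodule.mem_span_singleton_self _)
    obtain ⟨V₁, hV₁, hKS₁⟩ := ih (hK 0)
    obtain ⟨V₂, hV₂, hKS₂⟩ := ih (hK 1)
    exact ⟨_, (((hV₁.image _).union (hV₂.image _)).insert _).insert _,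
      hKS₁.insert_insert_union hKS₂ (by rw [hK, hn]) (by rw [hK, hn]) (hbK 0) (hbK 1) (hb 0) (hb 1)
        (b.orthonormal.2 (by simp only [ne_eq, Fin.zero_eq_one_iff]; omega))⟩

theorem IsIdempotentElem.eq_zero_or_eq_one_of_apply_eq_smul {K M : Type*} [Field K]
    [AddCommGroup M] [Module K M] [TopologicalSpace M] {A : M →L[K] M} (hA : IsIdempotentElem A)
    {c : K} {ψ : M} (hψ : ψ ≠ 0) (h : A ψ = c • ψ) : c = 0 ∨ c = 1 := by
  refine IsIdempotentElem.iff_eq_zero_or_one.1 (smul_left_injective K hψ ?_)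
  calc (c * c) • ψ = A (A ψ) := by rw [h, map_smul, h, smul_smul]
    _ = (A * A) ψ := rfl
    _ = c • ψ := by rw [hA.eq, h]

section Valuation

variable {H : Type*} [NormedAddCommGroup H] [InnerProductSpace ℂ H]

theorem isRankOneProjOp_starProjection_span_singleton {u : H} (hu : u ≠ 0) :
    IsRankOneProjOp (ℂ ∙ u).starProjection :=
  ⟨Submodule.inner_starProjection_left_eq_right _, (ℂ ∙ u).isIdempotentElem_starProjection, by
    rw [LinearMap.rank, Submodule.range_starProjection, Module.rank_eq_one_iff_finrank_eq_one,
      finrank_span_singleton hu]⟩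

theorem IsValuationOp.eq_zero_or_eq_one {O : Set (H →L[ℂ] H)} {v : (H →L[ℂ] H) → ℝ}
    (hv : IsValuationOp O v) {A : H →L[ℂ] H} (hAO : A ∈ O) (hA : IsIdempotentElem A) :
    v A = 0 ∨ v A = 1 := by
  obtain ⟨ψ, hψ, h⟩ := hv.1 A hAO
  exact_mod_cast hA.eq_zero_or_eq_one_of_apply_eq_smul hψ h

variable {V : Set H} {v : (H →L[ℂ] H) → ℝ}

theorem IsValuationOp.exists_joint_eigenvector
    (hv : IsValuationOp ((fun u => (ℂ ∙ u).starProjection) '' V) v) {S : Finset H}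
    (hSV : ↑S ⊆ V) (hS : (S : Set H).Pairwise (⟪·, ·⟫_ℂ = 0)) :
    ∃ ψ ≠ 0, ∀ u ∈ S, (ℂ ∙ u).starProjection ψ = (v (ℂ ∙ u).starProjection : ℂ) • ψ := by
  classical
  obtain ⟨ψ, hψ, h⟩ := hv.2 (S.image fun u => (ℂ ∙ u).starProjection)
    (by simpa using Set.image_mono hSV) (by
      simp only [Finset.forall_mem_image]
      intro x hx y hy
      obtain rfl | hxy := eq_or_ne x y
      · rfl
      · rw [starProjection_span_singleton_comp_eq_zero (hS hx hy hxy),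
          starProjection_span_singleton_comp_eq_zero (hS hy hx hxy.symm)])
  exact ⟨ψ, hψ, fun u hu => h _ (Finset.mem_image_of_mem _ hu)⟩

theorem IsKochenSpecker.not_isValuationOp [FiniteDimensional ℂ H] (hV : IsKochenSpecker ℂ V) :
    ¬ IsValuationOp ((fun u => (ℂ ∙ u).starProjection) '' V) v := by
  classical
  intro hv
  refine hV.2 {u | v (ℂ ∙ u).starProjection = 1} ⟨?_, ?_⟩
  · intro u hu w hw huw (hu1 : v _ = 1) (hw1 : v _ = 1)
    obtain ⟨ψ, hψ, h⟩ := hv.exists_joint_eigenvector (S := {u, w})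
      (by simp [Set.insert_subset_iff, hu, hw])
      (by simp [Set.pairwise_pair, huw, inner_eq_zero_symm.1 huw])
    refine hψ ?_
    have hψu : (ℂ ∙ u).starProjection ψ = ψ := by simpa [hu1] using h u (by simp)
    have hψw : (ℂ ∙ w).starProjection ψ = ψ := by simpa [hw1] using h w (by simp)
    calc ψ = ((ℂ ∙ u).starProjection ∘L (ℂ ∙ w).starProjection) ψ := by
          rw [ContinuousLinearMap.comp_apply, hψw, hψu]
      _ = 0 := by rw [starProjection_span_singleton_comp_eq_zero huw]; rfl
  · intro S hSV hcard hS
    obtain ⟨ψ, hψ, h⟩ := hv.exists_joint_eigenvector hSV hS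
    by_contra! hS1
    have horth (u : H) (hu : u ∈ S) : ⟪u, ψ⟫_ℂ = 0 := by
      have hv0 : v (ℂ ∙ u).starProjection = 0 :=
        (hv.eq_zero_or_eq_one ⟨u, hSV hu, rfl⟩
          (ℂ ∙ u).isIdempotentElem_starProjection).resolve_right (hS1 u hu)
      rw [← Submodule.mem_orthogonal_singleton_iff_inner_right, ← Submodule.ker_starProjection,
        LinearMap.mem_ker]
      simpa [hv0] using h u hu
    have hspan := S.span_eq_top_of_pairwise_inner_eq_zero (fun h0 => hV.1 (hSV h0)) hS hcard
    have hψ_orth : Submodule.span ℂ (S : Set H) ⟂ ℂ ∙ ψ :=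
      Submodule.isOrtho_span.2 (by simpa using horth)
    rw [hspan, Submodule.isOrtho_top_left, Submodule.span_singleton_eq_bot] at hψ_orth
    exact hψ hψ_orth

end Valuation

/-- Value no-go theorem: on any finite-dimensional complex Hilbert space of dimension
at least 3, there is a finite set of rank-1 projections for which no valuation exists. -/
theorem exists_finite_rankOneProjs_no_valuation
    {H : Type*} [NormedAddCommGroup H] [InnerProductSpace ℂ H]
    [FiniteDimensional ℂ H] (hdim : 3 ≤ Module.finrank ℂ H) :
    ∃ O : Finset (H →L[ℂ] H),
      (∀ A ∈ O, IsRankOneProjOp A) ∧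
      ¬ ∃ v : (H →L[ℂ] H) → ℝ, IsValuationOp (↑O) v := by
  obtain ⟨V, hVfin, hV⟩ := exists_finite_isKochenSpecker (𝕜 := ℂ) hdim
  refine ⟨(hVfin.image fun u => (ℂ ∙ u).starProjection).toFinset, ?_, ?_⟩
  · simp only [Set.Finite.mem_toFinset, Set.forall_mem_image]
    exact fun u hu => isRankOneProjOp_starProjection_span_singleton fun h => hV.1 (h ▸ hu)
  · rintro ⟨v, hv⟩
    exact hV.not_isValuationOp (by simpa using hv)
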